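/- For integers r ≥ s ≥ 2 with r > 3s − 3, the minimum n such that every coloring Δ : [1,n] → {∞} ∪ ℤ admits subsets S₁, S₂ with |S₁| = s, |S₂| = r, max(S₁) < min(S₂), diam(S₁) ≤ diam(S₂), where S₁ is ∞-monochromatic or zero-sum mod s and S₂ is ∞-monochromatic or zero-sum mod r, equals 3s + 3r − 4; in particular it coincides with the 3-coloring value f(s,r,3) = 3s + 3r − 4. -/
import Mathlib

open Finset

/-- diameter of a finite set of naturals -/
def diam (S : Finset ℕ) : ℕ := (S.max.getD 0) - (S.min.getD 0)

/-- S is monochromatic under a coloring -/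
def Mono {α : Type*} (f : ℕ → α) (S : Finset ℕ) : Prop := ∀ a ∈ S, ∀ b ∈ S, f a = f b

/-- S is zero-sum mod m under an integer coloring -/
def ZeroSum (f : ℕ → ℤ) (m : ℕ) (S : Finset ℕ) : Prop := (m : ℤ) ∣ ∑ x ∈ S, f x

/-- every element of S colored ∞ (= none) -/
def InftyMono (f : ℕ → Option ℤ) (S : Finset ℕ) : Prop := ∀ x ∈ S, f x = none

/-- S consists of ℤ-colored elements and is zero-sum mod m -/
def ZeroSumOpt (f : ℕ → Option ℤ) (m : ℕ) (S : Finset ℕ) : Prop :=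
  (∀ x ∈ S, (f x).isSome) ∧ (m : ℤ) ∣ ∑ x ∈ S, (f x).getD 0

lemma diam_eq {S : Finset ℕ} (h : S.Nonempty) : diam S = S.max' h - S.min' h := by
  unfold diam
  rw [← Finset.coe_max' h, ← Finset.coe_min' h]
  rfl

lemma diam_le_of_subset_Icc {S : Finset ℕ} {a b : ℕ} (hS : S ⊆ Finset.Icc a b)
    (h : S.Nonempty) : diam S ≤ b - a := by
  rw [diam_eq h]
  have h1 := hS (S.max'_mem h)
  have h2 := hS (S.min'_mem h)
  simp only [Finset.mem_Icc] at h1 h2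
  omega

lemma pred_card_le_diam {S : Finset ℕ} (h : S.Nonempty) : S.card - 1 ≤ diam S := by
  have hsub : S ⊆ Finset.Icc (S.min' h) (S.max' h) := fun x hx => by
    simp [Finset.mem_Icc, S.min'_le x hx, S.le_max' x hx]
  have := Finset.card_le_card hsub
  rw [Nat.card_Icc] at this
  rw [diam_eq h]
  omega

/-- main block lemma for the upper bound -/
lemma block_lemma (Δ : ℕ → Option ℤ) (m : ℕ) (T : Finset ℕ) (hT : 3 * m - 2 ≤ T.card)
    (hm : 1 ≤ m) :
    ∃ S ⊆ T, S.card = m ∧ (InftyMono Δ S ∨ ZeroSumOpt Δ m S) := by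
  classical
  by_cases hc : m ≤ (T.filter (fun x => Δ x = none)).card
  · obtain ⟨S, hST1, hScard⟩ := Finset.exists_subset_card_eq hc
    refine ⟨S, hST1.trans (Finset.filter_subset _ _), hScard, Or.inl ?_⟩
    intro x hx
    exact (Finset.mem_filter.mp (hST1 hx)).2
  · have hsplit : (T.filter (fun x => Δ x = none)).card
        + (T.filter (fun x => ¬ Δ x = none)).card = T.card :=
      Finset.card_filter_add_card_filter_not (s := T) (p := fun x => Δ x = none)
    have hT2card : 2 * m - 1 ≤ (T.filter (fun x => ¬ Δ x = none)).card := by omega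
    obtain ⟨S, hST2, hScard, hdvd⟩ :=
      Int.erdos_ginzburg_ziv (fun x => (Δ x).getD 0) hT2card
    refine ⟨S, hST2.trans (Finset.filter_subset _ _), hScard, Or.inr ⟨?_, hdvd⟩⟩
    intro x hx
    have := (Finset.mem_filter.mp (hST2 hx)).2
    exact Option.isSome_iff_ne_none.mpr this

/-- classify qualifying sets under the extremal coloring -/
lemma classify (Δ : ℕ → Option ℤ)
    (hΔ : ∀ x, Δ x = some 0 ∨ Δ x = some 1 ∨ Δ x = none)
    {m : ℕ} (hm : 0 < m) {S : Finset ℕ} (hS : S.card = m)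
    (hprop : InftyMono Δ S ∨ ZeroSumOpt Δ m S) :
    (∀ x ∈ S, Δ x = some 0) ∨ (∀ x ∈ S, Δ x = some 1) ∨ (∀ x ∈ S, Δ x = none) := by
  classical
  rcases hprop with h | ⟨hsome, hdvd⟩
  · exact Or.inr (Or.inr h)
  · set B := S.filter (fun x => Δ x = some 1) with hB
    have hsum : ∑ x ∈ S, (Δ x).getD 0 = (B.card : ℤ) := by
      rw [hB, ← Finset.sum_boole]
      refine Finset.sum_congr rfl fun x hx => ?_
      rcases hΔ x with h0 | h1 | hn
      · simp [h0]
      · simp [h1]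
      · exact absurd (hsome x hx) (by simp [hn])
    rw [hsum] at hdvd
    have hdvd' : m ∣ B.card := Int.natCast_dvd_natCast.mp hdvd
    have hle : B.card ≤ m := hS ▸ Finset.card_le_card (Finset.filter_subset _ _)
    rcases Nat.eq_zero_or_pos B.card with h0 | hpos
    · left
      intro x hx
      have hx1 : ¬ Δ x = some 1 := by
        intro h1
        have : x ∈ B := Finset.mem_filter.mpr ⟨hx, h1⟩
        rw [Finset.card_eq_zero.mp h0] at this
        exact absurd this (Finset.notMem_empty x)
      rcases hΔ x with h | h | h
      · exact h
      · exact absurd h hx1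
      · exact absurd (hsome x hx) (by simp [h])
    · have hBm : B.card = m := le_antisymm hle (Nat.le_of_dvd hpos hdvd')
      have hBS : B = S := Finset.eq_of_subset_of_card_le (Finset.filter_subset _ _)
        (by omega)
      right; left
      intro x hx
      exact (Finset.mem_filter.mp (hBS ▸ hx : x ∈ B)).2

/-- a set of size m inside an Icc of size < m is impossible -/
lemma no_fit {S : Finset ℕ} {lo hi m : ℕ} (hsub : S ⊆ Finset.Icc lo hi)
    (hcard : S.card = m) (hm : 0 < m) (hsz : hi + 1 < lo + m) : False := by
  have := Finset.card_le_card hsub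
  rw [Nat.card_Icc, hcard] at this
  omega

theorem stmt15 (s r : ℕ) (hs : 2 ≤ s) (hsr : s ≤ r) (hr : 3 * s - 3 < r) :
    IsLeast {n : ℕ | ∀ Δ : ℕ → Option ℤ, ∃ S₁ S₂ : Finset ℕ,
    S₁ ⊆ Finset.Icc 1 n ∧ S₂ ⊆ Finset.Icc 1 n ∧
    (InftyMono Δ S₁ ∨ ZeroSumOpt Δ s S₁) ∧ (InftyMono Δ S₂ ∨ ZeroSumOpt Δ r S₂) ∧
    S₁.card = s ∧ S₂.card = r ∧
    (∀ a ∈ S₁, ∀ b ∈ S₂, a < b) ∧ diam S₁ ≤ diam S₂} (3 * s + 3 * r - 4) := by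
  have hr' : 3 * s - 2 ≤ r := by omega
  constructor
  · -- membership: every coloring of [1, 3s+3r-4] works
    intro Δ
    have hcP : 3 * s - 2 ≤ (Finset.Icc 1 (3 * s - 2)).card := by
      rw [Nat.card_Icc]; omega
    obtain ⟨S₁, hS₁P, hS₁card, hS₁prop⟩ := block_lemma Δ s _ hcP (by omega)
    have hcQ : 3 * r - 2 ≤ (Finset.Icc (3 * s - 1) (3 * s + 3 * r - 4)).card := by
      rw [Nat.card_Icc]; omega
    obtain ⟨S₂, hS₂Q, hS₂card, hS₂prop⟩ := block_lemma Δ r _ hcQ (by omega)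
    have hne1 : S₁.Nonempty := Finset.card_pos.mp (by omega)
    have hne2 : S₂.Nonempty := Finset.card_pos.mp (by omega)
    refine ⟨S₁, S₂, hS₁P.trans (Finset.Icc_subset_Icc le_rfl (by omega)),
      hS₂Q.trans (Finset.Icc_subset_Icc (by omega) le_rfl),
      hS₁prop, hS₂prop, hS₁card, hS₂card, ?_, ?_⟩
    · intro a ha b hb
      have h1 := hS₁P ha; have h2 := hS₂Q hb
      simp only [Finset.mem_Icc] at h1 h2
      omega
    · have d1 : diam S₁ ≤ 3 * s - 2 - 1 := diam_le_of_subset_Icc hS₁P hne1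
      have d2 : S₂.card - 1 ≤ diam S₂ := pred_card_le_diam hne2
      omega
  · -- lower bound
    intro n hn
    by_contra hlt
    push_neg at hlt
    set Δ : ℕ → Option ℤ := fun x =>
      if x ≤ s - 1 then some 0
      else if x ≤ 2 * s - 2 then some 1
      else if x ≤ 3 * s - 3 then none
      else if x ≤ 3 * s + r - 3 then some 0
      else if x ≤ 3 * s + 2 * r - 4 then some 1
      else none with hΔdef
    have hΔ : ∀ x, Δ x = some 0 ∨ Δ x = some 1 ∨ Δ x = none := by
      intro x; rw [hΔdef]; dsimp only; split_ifs <;> simp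
    obtain ⟨S₁, S₂, hS₁sub, hS₂sub, hp₁, hp₂, hc₁, hc₂, hord, hdiam⟩ := hn Δ
    have hclass₁ := classify Δ hΔ (show 0 < s by omega) hc₁ hp₁
    have hclass₂ := classify Δ hΔ (show 0 < r by omega) hc₂ hp₂
    have hA : ∃ a ∈ S₁, 3 * s - 2 ≤ a := by
      by_contra h
      push_neg at h
      have hbound : ∀ x ∈ S₁, 1 ≤ x ∧ x ≤ 3 * s - 3 := by
        intro x hx
        have := hS₁sub hx
        simp only [Finset.mem_Icc] at this
        have := h x hx
        omega
      rcases hclass₁ with h0 | h1 | hinf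
      · refine no_fit (lo := 1) (hi := s - 1) ?_ hc₁ (by omega) (by omega)
        intro x hx
        have hb := hbound x hx
        have hcx := h0 x hx
        rw [hΔdef] at hcx
        simp only [Finset.mem_Icc]
        dsimp only at hcx
        split_ifs at hcx <;> first | omega | simp at hcx
      · refine no_fit (lo := s) (hi := 2 * s - 2) ?_ hc₁ (by omega) (by omega)
        intro x hx
        have hb := hbound x hx
        have hcx := h1 x hx
        rw [hΔdef] at hcx
        simp only [Finset.mem_Icc]
        dsimp only at hcx
        split_ifs at hcx <;> first | omega | simp at hcx
      · refine no_fit (lo := 2 * s - 1) (hi := 3 * s - 3) ?_ hc₁ (by omega) (by omega)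
        intro x hx
        have hb := hbound x hx
        have hcx := hinf x hx
        rw [hΔdef] at hcx
        simp only [Finset.mem_Icc]
        dsimp only at hcx
        split_ifs at hcx <;> first | omega | simp at hcx
    have hB : ∃ b ∈ S₂, b ≤ 3 * s - 2 := by
      by_contra h
      push_neg at h
      have hbound : ∀ x ∈ S₂, 3 * s - 1 ≤ x ∧ x ≤ 3 * s + 3 * r - 5 := by
        intro x hx
        have := hS₂sub hx
        simp only [Finset.mem_Icc] at this
        have := h x hx
        omega
      rcases hclass₂ with h0 | h1 | hinf
      · refine no_fit (lo := 3 * s - 1) (hi := 3 * s + r - 3) ?_ hc₂ (by omega) (by omega)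
        intro x hx
        have hb := hbound x hx
        have hcx := h0 x hx
        rw [hΔdef] at hcx
        simp only [Finset.mem_Icc]
        dsimp only at hcx
        split_ifs at hcx <;> first | omega | simp at hcx
      · refine no_fit (lo := 3 * s + r - 2) (hi := 3 * s + 2 * r - 4) ?_ hc₂ (by omega) (by omega)
        intro x hx
        have hb := hbound x hx
        have hcx := h1 x hx
        rw [hΔdef] at hcx
        simp only [Finset.mem_Icc]
        dsimp only at hcx
        split_ifs at hcx <;> first | omega | simp at hcx
      · refine no_fit (lo := 3 * s + 2 * r - 3) (hi := 3 * s + 3 * r - 5) ?_ hc₂ (by omega) (by omega)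
        intro x hx
        have hb := hbound x hx
        have hcx := hinf x hx
        rw [hΔdef] at hcx
        simp only [Finset.mem_Icc]
        dsimp only at hcx
        split_ifs at hcx <;> first | omega | simp at hcx
    obtain ⟨a, ha, haa⟩ := hA
    obtain ⟨b, hb, hbb⟩ := hB
    have := hord a ha b hb
    omega
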